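/- The SC interleaver π defined by π(m, l) = (π_{l'}^{out}(π_l^{in}(m)), l') with l' = (l - (⌊π_l^{in}(m)/2⌋ mod W)) mod L is a bijection from M × L onto itself, where M = {0,...,M-1} and L = {0,...,L-1}. -/

import Mathlib

/-!
The interleaver is a composition of three bijections of `Fin M × ZMod L`: apply the input
permutation of the current slot, `(m, l) ↦ (π_l^{in} m, l)`; shift the slot by an amount depending
only on the (now fixed) position, `(m₁, l) ↦ (m₁, l - c m₁)`; apply the output permutation of the
new slot, `(m₁, l') ↦ (π_{l'}^{out} m₁, l')`. Each step fixes one coordinate and permutes the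
other, so it is invertible.
-/

def scInterleaver {α G : Type*} [AddGroup G] (c : α → G) (πin πout : G → Equiv.Perm α) :
    α × G ≃ α × G :=
  (Equiv.prodCongrLeft πin).trans <|
    (Equiv.prodCongrRight fun m => Equiv.subRight (c m)).trans (Equiv.prodCongrLeft πout)

theorem stmt3_general (M L W : ℕ)
    (πin : ZMod L → Equiv.Perm (Fin M)) (πout : ZMod L → Equiv.Perm (Fin M)) :
    Function.Bijective (fun p : Fin M × ZMod L =>
      let m₁ : Fin M := πin p.2 p.1
      let l' : ZMod L := p.2 - (((m₁ : ℕ) / 2) % W : ℕ)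
      ((πout l' m₁, l') : Fin M × ZMod L)) :=
  (scInterleaver (fun m : Fin M => (((m : ℕ) / 2 % W : ℕ) : ZMod L)) πin πout).bijective

/-- The SC interleaver π(m,l) = (π_{l'}^{out}(π_l^{in}(m)), l') with
l' = (l - (⌊π_l^{in}(m)/2⌋ mod W)) mod L is a bijection of {0,…,M-1} × {0,…,L-1},
where each π_l^{in} is a permutation of {0,…,M-1} and each π_l^{out} is a
pair-preserving (constrained) permutation of {0,…,M-1}. -/
theorem stmt3 (M L W : ℕ) (hM : Even M) (hW : 1 ≤ W) (hL : 1 ≤ L) [NeZero L]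
    (πin : ZMod L → Equiv.Perm (Fin M)) (πout : ZMod L → Equiv.Perm (Fin M))
    (hconstr : ∀ l (a b : Fin M), (a : ℕ) / 2 = (b : ℕ) / 2 →
      ((πout l a : ℕ)) / 2 = ((πout l b : ℕ)) / 2) :
    Function.Bijective (fun p : Fin M × ZMod L =>
      let m₁ : Fin M := πin p.2 p.1
      let l' : ZMod L := p.2 - (((m₁ : ℕ) / 2) % W : ℕ)
      ((πout l' m₁, l') : Fin M × ZMod L)) :=
  stmt3_general M L W πin πout
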